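/- Let F : 𝔻 → 𝔻 be a map of the Poincaré disk and x ∈ 𝔻, v ∈ T_x𝔻 a nonzero vector such that d(exp_x(nv), F^n(x)) = o(n) as n → ∞, where d is the hyperbolic metric. Then F^n(x) converges in the Euclidean topology of the closed disk to the boundary endpoint x_+ ∈ ∂𝔻 of the geodesic ray t ↦ exp_x(tv). -/
import Mathlib


open Filter

/-- The inverse hyperbolic cosine, `arcosh x = log (x + √(x² - 1))`. -/
noncomputable def arcosh (x : ℝ) : ℝ := Real.log (x + Real.sqrt (x ^ 2 - 1))

/-- The hyperbolic (Poincaré) distance on the unit disk `𝔻 ⊂ ℂ`, via the standard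
formula `d(z,w) = arcosh(1 + 2|z-w|²/((1-|z|²)(1-|w|²)))`. -/
noncomputable def dD (z w : ℂ) : ℝ :=
  arcosh (1 + 2 * ‖z - w‖ ^ 2 / ((1 - ‖z‖ ^ 2) * (1 - ‖w‖ ^ 2)))

lemma arcosh_nonneg {y : ℝ} (hy : 1 ≤ y) : 0 ≤ arcosh y := by
  unfold arcosh
  apply Real.log_nonneg
  have := Real.sqrt_nonneg (y ^ 2 - 1)
  linarith

lemma cosh_arcosh {y : ℝ} (hy : 1 ≤ y) : Real.cosh (arcosh y) = y := by
  unfold arcosh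
  have hs2 : Real.sqrt (y ^ 2 - 1) ^ 2 = y ^ 2 - 1 := Real.sq_sqrt (by nlinarith)
  have hsn : 0 ≤ Real.sqrt (y ^ 2 - 1) := Real.sqrt_nonneg _
  set s := Real.sqrt (y ^ 2 - 1)
  have hu : (0:ℝ) < y + s := by linarith
  have hmul : (y + s) * (y - s) = 1 := by nlinarith
  have hinv : (y + s)⁻¹ = y - s := inv_eq_of_mul_eq_one_right hmul
  rw [Real.cosh_eq, Real.exp_log hu, Real.exp_neg, Real.exp_log hu, hinv]
  ring

lemma one_le_arg {z w : ℂ} (hz : ‖z‖ < 1) (hw : ‖w‖ < 1) :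
    1 ≤ 1 + 2 * ‖z - w‖ ^ 2 / ((1 - ‖z‖ ^ 2) * (1 - ‖w‖ ^ 2)) := by
  have h1 : (0:ℝ) < 1 - ‖z‖ ^ 2 := by nlinarith [norm_nonneg z]
  have h2 : (0:ℝ) < 1 - ‖w‖ ^ 2 := by nlinarith [norm_nonneg w]
  have : 0 ≤ 2 * ‖z - w‖ ^ 2 / ((1 - ‖z‖ ^ 2) * (1 - ‖w‖ ^ 2)) := by positivity
  linarith

lemma dD_nonneg {z w : ℂ} (hz : ‖z‖ < 1) (hw : ‖w‖ < 1) : 0 ≤ dD z w :=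
  arcosh_nonneg (one_le_arg hz hw)

lemma cosh_dD {z w : ℂ} (hz : ‖z‖ < 1) (hw : ‖w‖ < 1) :
    Real.cosh (dD z w) = 1 + 2 * ‖z - w‖ ^ 2 / ((1 - ‖z‖ ^ 2) * (1 - ‖w‖ ^ 2)) :=
  cosh_arcosh (one_le_arg hz hw)

lemma key_bound (X a b p q A B Ed Ec : ℝ) (hX : 0 < X) (ha : 0 < a) (hb : 0 < b)
    (hb1 : b ≤ 1) (hp : p ≤ 4) (hq : 0 ≤ q) (hA0 : 0 ≤ A) (hA : A ≤ Ed)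
    (hB : Ec / 4 ≤ B) (hEc : 4 ≤ Ec) (hEd : 0 < Ed)
    (e1 : B = 2 * p / (X * a)) (e2 : A = 2 * q / (a * b)) :
    q ≤ 16 / X * (Ed / Ec) := by
  have hXa : (0:ℝ) < X * a := mul_pos hX ha
  have hab : (0:ℝ) < a * b := mul_pos ha hb
  have e1' : B * (X * a) = 2 * p := by rw [e1, div_mul_cancel₀ _ (ne_of_gt hXa)]
  have e2' : A * (a * b) = 2 * q := by rw [e2, div_mul_cancel₀ _ (ne_of_gt hab)]
  have hq1 : 2 * q ≤ Ed * a := by nlinarith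
  have ha1 : Ec * (X * a) ≤ 32 := by nlinarith
  have hfin : q * (X * Ec) ≤ 16 * Ed := by nlinarith
  have h16 : 16 / X * (Ed / Ec) = 16 * Ed / (X * Ec) := by
    field_simp
  rw [h16, le_div_iff₀ (by positivity)]
  exact hfin

/-- If `F` maps the Poincaré disk into itself and the orbit of `x` sublinearly tracks
the hyperbolic geodesic ray `γ` from `x` with speed `c > 0` (i.e. the geodesic
`t ↦ exp_x(tv)` with `‖v‖ = c ≠ 0`), then `Fⁿ(x)` converges, in the Euclidean topology
of the closed disk, to the boundary endpoint `x₊ ∈ ∂𝔻` of the ray. -/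
theorem stmt19 (F : ℂ → ℂ) (hF : ∀ z : ℂ, ‖z‖ < 1 → ‖F z‖ < 1)
    (x : ℂ) (hx : ‖x‖ < 1)
    (γ : ℝ → ℂ) (hγmem : ∀ t : ℝ, 0 ≤ t → ‖γ t‖ < 1)
    (hγ : ∀ s t : ℝ, 0 ≤ s → 0 ≤ t → dD (γ s) (γ t) = |s - t|)
    (hγ0 : γ 0 = x)
    (c : ℝ) (hc : 0 < c)
    (xplus : ℂ) (hxplus : ‖xplus‖ = 1)
    (hlim : Tendsto γ atTop (nhds xplus))
    (horbit : Tendsto (fun n : ℕ => dD (γ (c * n)) (F^[n] x) / n) atTop (nhds 0)) :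
    Tendsto (fun n : ℕ => F^[n] x) atTop (nhds xplus) := by
  -- orbit stays in the disk
  have horb : ∀ n : ℕ, ‖F^[n] x‖ < 1 := by
    intro n
    induction n with
    | zero => simpa using hx
    | succ n ih => rw [Function.iterate_succ_apply']; exact hF _ ih
  have hγn : ∀ n : ℕ, ‖γ (c * n)‖ < 1 := fun n => hγmem _ (by positivity)
  set d : ℕ → ℝ := fun n => dD (γ (c * n)) (F^[n] x) with hd
  have hdnn : ∀ n, 0 ≤ d n := fun n => dD_nonneg (hγn n) (horb n)
  have hX : (0:ℝ) < 1 - ‖x‖ ^ 2 := by nlinarith [norm_nonneg x]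
  -- geodesic equation: cosh (c n) = 1 + 2‖x - γ(cn)‖²/((1-‖x‖²)(1-‖γ(cn)‖²))
  have hgeo : ∀ n : ℕ, Real.cosh (c * n) =
      1 + 2 * ‖x - γ (c * n)‖ ^ 2 / ((1 - ‖x‖ ^ 2) * (1 - ‖γ (c * n)‖ ^ 2)) := by
    intro n
    have h0 : dD x (γ (c * n)) = c * n := by
      have h1 := hγ 0 (c * n) le_rfl (by positivity)
      rw [hγ0] at h1
      rw [h1, zero_sub, abs_neg, abs_of_nonneg (by positivity)]
    conv_lhs => rw [← h0]
    exact cosh_dD hx (hγn n)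
  -- orbit equation
  have horbeq : ∀ n : ℕ, Real.cosh (d n) =
      1 + 2 * ‖γ (c * n) - F^[n] x‖ ^ 2 / ((1 - ‖γ (c * n)‖ ^ 2) * (1 - ‖F^[n] x‖ ^ 2)) :=
    fun n => cosh_dD (hγn n) (horb n)
  -- d n - c n → -∞
  have hbot : Tendsto (fun n : ℕ => d n - c * n) atTop atBot := by
    have h1 : Tendsto (fun n : ℕ => d n / n - c) atTop (nhds (0 - c)) :=
      horbit.sub tendsto_const_nhds
    rw [zero_sub] at h1
    have h2 : Tendsto (fun n : ℕ => (n : ℝ) * (d n / n - c)) atTop atBot :=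
      Filter.Tendsto.atTop_mul_neg (by linarith) tendsto_natCast_atTop_atTop h1
    apply h2.congr'
    filter_upwards [eventually_ge_atTop 1] with n hn
    have hn0 : (n : ℝ) ≠ 0 := by positivity
    field_simp
  have hexp0 : Tendsto (fun n : ℕ => 16 / (1 - ‖x‖ ^ 2) * Real.exp (d n - c * n))
      atTop (nhds 0) := by
    have := Real.tendsto_exp_atBot.comp hbot
    simpa using (this.const_mul (16 / (1 - ‖x‖ ^ 2)))
  -- key bound, eventually
  have hkey : ∀ᶠ n : ℕ in atTop,
      ‖γ (c * n) - F^[n] x‖ ^ 2 ≤ 16 / (1 - ‖x‖ ^ 2) * Real.exp (d n - c * n) := by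
    have hcn : Tendsto (fun n : ℕ => c * n) atTop atTop :=
      (tendsto_natCast_atTop_atTop).const_mul_atTop hc
    filter_upwards [hcn.eventually_ge_atTop (Real.log 4)] with n hn
    have hap : (0:ℝ) < 1 - ‖γ (c * n)‖ ^ 2 := by nlinarith [norm_nonneg (γ (c * n)), hγn n]
    have hbp : (0:ℝ) < 1 - ‖F^[n] x‖ ^ 2 := by nlinarith [norm_nonneg (F^[n] x), horb n]
    have hb1 : 1 - ‖F^[n] x‖ ^ 2 ≤ 1 := by nlinarith [norm_nonneg (F^[n] x)]
    have hp4 : ‖x - γ (c * n)‖ ^ 2 ≤ 4 := by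
      have := norm_sub_le x (γ (c * n))
      nlinarith [norm_nonneg (x - γ (c * n)), (hγn n).le, hx.le]
    have hEc : (4:ℝ) ≤ Real.exp (c * n) := by
      calc (4:ℝ) = Real.exp (Real.log 4) := (Real.exp_log (by norm_num)).symm
      _ ≤ Real.exp (c * n) := Real.exp_le_exp.mpr hn
    have hcoshc : Real.exp (c * n) / 4 ≤ Real.cosh (c * n) - 1 := by
      rw [Real.cosh_eq]
      have := (Real.exp_pos (-(c * n))).le
      nlinarith [Real.exp_pos (c * n)]
    have hcoshd : Real.cosh (d n) - 1 ≤ Real.exp (d n) := by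
      rw [Real.cosh_eq]
      have h1 : Real.exp (-(d n)) ≤ Real.exp (d n) := Real.exp_le_exp.mpr (by linarith [hdnn n])
      nlinarith
    have hA0 : (0:ℝ) ≤ Real.cosh (d n) - 1 := by nlinarith [Real.one_le_cosh (d n)]
    have e1 : Real.cosh (c * (n:ℝ)) - 1 =
        2 * ‖x - γ (c * n)‖ ^ 2 / ((1 - ‖x‖ ^ 2) * (1 - ‖γ (c * n)‖ ^ 2)) := by
      rw [hgeo n]; ring
    have e2 : Real.cosh (d n) - 1 =
        2 * ‖γ (c * n) - F^[n] x‖ ^ 2 / ((1 - ‖γ (c * n)‖ ^ 2) * (1 - ‖F^[n] x‖ ^ 2)) := by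
      rw [horbeq n]; ring
    have := key_bound (1 - ‖x‖ ^ 2) (1 - ‖γ (c * n)‖ ^ 2) (1 - ‖F^[n] x‖ ^ 2)
      (‖x - γ (c * n)‖ ^ 2) (‖γ (c * n) - F^[n] x‖ ^ 2)
      (Real.cosh (d n) - 1) (Real.cosh (c * n) - 1) (Real.exp (d n)) (Real.exp (c * n))
      hX hap hbp hb1 hp4 (by positivity) hA0 hcoshd hcoshc hEc (Real.exp_pos _) e1 e2
    rw [Real.exp_sub]
    exact this
  -- so the difference tends to 0 in norm
  have hdiff0 : Tendsto (fun n : ℕ => γ (c * n) - F^[n] x) atTop (nhds 0) := by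
    rw [tendsto_zero_iff_norm_tendsto_zero]
    have hsq : Tendsto (fun n : ℕ => ‖γ (c * n) - F^[n] x‖ ^ 2) atTop (nhds 0) :=
      squeeze_zero' (Eventually.of_forall fun n => by positivity) hkey hexp0
    have := (Real.continuous_sqrt.tendsto 0).comp hsq
    simp only [Function.comp_def, Real.sqrt_zero] at this
    apply this.congr
    intro n
    rw [Real.sqrt_sq (norm_nonneg _)]
  -- γ(c n) → xplus
  have hγlim : Tendsto (fun n : ℕ => γ (c * n)) atTop (nhds xplus) :=
    hlim.comp ((tendsto_natCast_atTop_atTop).const_mul_atTop hc)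
  have := hγlim.sub hdiff0
  simpa using this
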